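/- Let f, g : ℝⁿ → ℝ be twice continuously differentiable, let Q ⊆ ℝⁿ, and let 0 ≤ i, j ≤ n be integers with i + j ≥ n. If f is non-convex of grade i on Q and g is non-convex of grade j on Q, then the soft maximum smax(f, g), defined by smax(f, g)(x) := ln(e^{f(x)} + e^{g(x)}), is a twice continuously differentiable function that is non-convex of grade i + j − n on Q. -/

import Mathlib

open scoped RealInnerProductSpace
open Real Set

/-- `f` is non-convex of grade `τ` on `Q`. -/
def NonconvexOfGrade {n : ℕ} (f : EuclideanSpace ℝ (Fin n) → ℝ)
    (Q : Set (EuclideanSpace ℝ (Fin n))) (τ : ℕ) : Prop :=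
  ∀ x ∈ Q, ∃ V : Submodule ℝ (EuclideanSpace ℝ (Fin n)),
    τ ≤ Module.finrank ℝ V ∧ ∀ h ∈ V, 0 ≤ iteratedFDeriv ℝ 2 f x ![h, h]

/-! With `a = e^{f x}`, `b = e^{g x}`, the Hessian of `log (e^f + e^g)` in direction `h` is
`(a f''(h,h) + b g''(h,h)) / (a + b) + a b (f'h - g'h)² / (a + b)²`, which is nonnegative wherever
both Hessians are. If they are on `V` resp. `W`, they both are on `V ⊓ W`, and
`dim (V ⊓ W) ≥ dim V + dim W - n`. -/

theorem Submodule.finrank_add_finrank_sub_finrank_le_finrank_inf {K V : Type*} [DivisionRing K]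
    [AddCommGroup V] [Module K V] [FiniteDimensional K V] (s t : Submodule K V) :
    Module.finrank K s + Module.finrank K t - Module.finrank K V ≤ Module.finrank K ↥(s ⊓ t) := by
  have := s.finrank_sup_add_finrank_inf_eq t
  have := (s ⊔ t).finrank_le
  omega

section SoftMax

variable {E : Type*} [NormedAddCommGroup E] [NormedSpace ℝ E] {f g : E → ℝ}

theorem fderiv_log_exp_add_exp (hf : Differentiable ℝ f) (hg : Differentiable ℝ g) :
    fderiv ℝ (fun x => log (exp (f x) + exp (g x))) =
      fun x => (exp (f x) + exp (g x))⁻¹ • (exp (f x) • fderiv ℝ f x + exp (g x) • fderiv ℝ g x) := by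
  funext x
  exact (((hf x).hasFDerivAt.exp.add (hg x).hasFDerivAt.exp).log
    (add_pos (exp_pos _) (exp_pos _)).ne').fderiv

theorem fderiv_fderiv_log_exp_add_exp_apply (hf : Differentiable ℝ f) (hg : Differentiable ℝ g)
    {x : E} (hf' : DifferentiableAt ℝ (fderiv ℝ f) x) (hg' : DifferentiableAt ℝ (fderiv ℝ g) x)
    (h : E) :
    fderiv ℝ (fderiv ℝ (fun x => log (exp (f x) + exp (g x)))) x h h =
      (exp (f x) * fderiv ℝ (fderiv ℝ f) x h h + exp (g x) * fderiv ℝ (fderiv ℝ g) x h h) /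
          (exp (f x) + exp (g x)) +
        exp (f x) * exp (g x) * (fderiv ℝ f x h - fderiv ℝ g x h) ^ 2 /
          (exp (f x) + exp (g x)) ^ 2 := by
  have hsum : HasFDerivAt (fun y => exp (f y) + exp (g y))
      (exp (f x) • fderiv ℝ f x + exp (g x) • fderiv ℝ g x) x :=
    (hf x).hasFDerivAt.exp.add (hg x).hasFDerivAt.exp
  have hinv := (hasDerivAt_inv (add_pos (exp_pos (f x)) (exp_pos (g x))).ne').comp_hasFDerivAt x hsum
  have hnum := ((hf x).hasFDerivAt.exp.smul hf'.hasFDerivAt).add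
    ((hg x).hasFDerivAt.exp.smul hg'.hasFDerivAt)
  have hquot : HasFDerivAt (fun y => (exp (f y) + exp (g y))⁻¹ •
      (exp (f y) • fderiv ℝ f y + exp (g y) • fderiv ℝ g y)) _ x := hinv.smul hnum
  rw [fderiv_log_exp_add_exp hf hg, hquot.fderiv]
  simp only [add_apply, smul_apply, ContinuousLinearMap.smulRight_apply, smul_eq_mul,
    Function.comp_apply]
  field_simp
  ring

theorem fderiv_fderiv_log_exp_add_exp_nonneg (hf : Differentiable ℝ f) (hg : Differentiable ℝ g)
    {x : E} (hf' : DifferentiableAt ℝ (fderiv ℝ f) x) (hg' : DifferentiableAt ℝ (fderiv ℝ g) x)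
    {h : E} (hfh : 0 ≤ fderiv ℝ (fderiv ℝ f) x h h) (hgh : 0 ≤ fderiv ℝ (fderiv ℝ g) x h h) :
    0 ≤ fderiv ℝ (fderiv ℝ (fun x => log (exp (f x) + exp (g x)))) x h h := by
  rw [fderiv_fderiv_log_exp_add_exp_apply hf hg hf' hg']
  have := mul_nonneg (exp_pos (f x)).le hfh
  have := mul_nonneg (exp_pos (g x)).le hgh
  positivity

end SoftMax

theorem smax_nonconvexOfGrade_general {n : ℕ}
    (f g : EuclideanSpace ℝ (Fin n) → ℝ)
    (hf : ContDiff ℝ 2 f) (hg : ContDiff ℝ 2 g)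
    (Q : Set (EuclideanSpace ℝ (Fin n)))
    (i j : ℕ)
    (hfg : NonconvexOfGrade f Q i) (hgg : NonconvexOfGrade g Q j) :
    ContDiff ℝ 2 (fun x => Real.log (Real.exp (f x) + Real.exp (g x))) ∧
    NonconvexOfGrade (fun x => Real.log (Real.exp (f x) + Real.exp (g x))) Q (i + j - n) := by
  refine ⟨(hf.exp.add hg.exp).log fun x => (add_pos (exp_pos _) (exp_pos _)).ne', ?_⟩
  intro x hx
  obtain ⟨V, hV, hfV⟩ := hfg x hx
  obtain ⟨W, hW, hgW⟩ := hgg x hx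
  refine ⟨V ⊓ W, ?_, fun h ⟨hhV, hhW⟩ => ?_⟩
  · calc i + j - n ≤ Module.finrank ℝ V + Module.finrank ℝ W - n := by omega
      _ ≤ Module.finrank ℝ ↥(V ⊓ W) := by
        simpa only [finrank_euclideanSpace_fin] using
          V.finrank_add_finrank_sub_finrank_le_finrank_inf W
  · have hf' := (hf.fderiv_right (m := 1) le_rfl).differentiable one_ne_zero x
    have hg' := (hg.fderiv_right (m := 1) le_rfl).differentiable one_ne_zero x
    have hfh := hfV h hhV
    have hgh := hgW h hhW
    simp only [iteratedFDeriv_two_apply, Matrix.cons_val_zero, Matrix.cons_val_one] at hfh hgh ⊢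
    exact fderiv_fderiv_log_exp_add_exp_nonneg (hf.differentiable two_ne_zero)
      (hg.differentiable two_ne_zero) hf' hg' hfh hgh

/-- Grading rule for the soft maximum: if `f` is non-convex of grade `i` and `g` of grade `j`,
with `i + j ≥ n`, then `smax(f,g) = ln(e^f + e^g)` is twice continuously differentiable and
non-convex of grade `i + j - n`. -/
theorem smax_nonconvexOfGrade {n : ℕ} (hn : 1 ≤ n)
    (f g : EuclideanSpace ℝ (Fin n) → ℝ)
    (hf : ContDiff ℝ 2 f) (hg : ContDiff ℝ 2 g)
    (Q : Set (EuclideanSpace ℝ (Fin n)))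
    (i j : ℕ) (hi : i ≤ n) (hj : j ≤ n) (hij : n ≤ i + j)
    (hfg : NonconvexOfGrade f Q i) (hgg : NonconvexOfGrade g Q j) :
    ContDiff ℝ 2 (fun x => Real.log (Real.exp (f x) + Real.exp (g x))) ∧
    NonconvexOfGrade (fun x => Real.log (Real.exp (f x) + Real.exp (g x))) Q (i + j - n) :=
  smax_nonconvexOfGrade_general f g hf hg Q i j hfg hgg
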